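/- arXiv:0802.1545 — 2 statements merged into one kernel-verified Lean document; each statement's English description precedes it below -/
import Mathlib

section
/- Let k be an algebraically closed field of characteristic zero and let R = k⟨x,y⟩/(xy − yx − y²). A k-algebra endomorphism φ of R is an automorphism if and only if there exist a nonzero scalar α ∈ k and a polynomial p ∈ k[t] such that φ(x) = α•x + p(y) (the evaluation of p at y in R) and φ(y) = α•y. In particular, every k-algebra automorphism of R is of this form. -/
/-- The defining relation `x*y = y*x + y*y` of the Jordanian algebra
`R = k⟨x,y⟩/(xy - yx - y²)`, as a relation on the free algebra on two generators. -/
inductive JordanRel (k : Type) [Field k] :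
    FreeAlgebra k (Fin 2) → FreeAlgebra k (Fin 2) → Prop
  | rel : JordanRel k (FreeAlgebra.ι k 0 * FreeAlgebra.ι k 1)
      (FreeAlgebra.ι k 1 * FreeAlgebra.ι k 0 + FreeAlgebra.ι k 1 * FreeAlgebra.ι k 1)

/-- The Jordanian algebra `R = k⟨x,y⟩/(xy - yx - y²)`. -/
abbrev Jordanian (k : Type) [Field k] := RingQuot (JordanRel k)

/-- The image of the generator `x` in the Jordanian algebra. -/
noncomputable def Jordanian.x (k : Type) [Field k] : Jordanian k :=
  RingQuot.mkAlgHom k (JordanRel k) (FreeAlgebra.ι k 0)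

/-- The image of the generator `y` in the Jordanian algebra. -/
noncomputable def Jordanian.y (k : Type) [Field k] : Jordanian k :=
  RingQuot.mkAlgHom k (JordanRel k) (FreeAlgebra.ι k 1)

/-!
Let `R` act on `k[X]` by `x ↦ X² d/dX` and `y ↦ X`. The standard monomial `y^i x^j` sends `X^n`
to `n(n+1)⋯(n+j-1) X^(n+i+j)`, so every nonzero `r` raises degrees by some `d`, and the
coefficient of `X^(n+d)` in `r • X^n` is a nonzero polynomial in `n`. These leading symbols
multiply up to a shift of the variable, hence `R` is a domain, the action is faithful, the units
of `R` are scalars and the centralizer of `y` is `k[y]`.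

If `φ` is an automorphism, the image of `φ y` in `R / yR ≅ k[x]` squares to zero by the relation,
so `φ y = y s`, and likewise `φ⁻¹ y = y w`. Then `y = φ (y w) = y s φ(w)` makes `s` a unit, so
`φ y = c y`, and the relation then says that `φ x - c x` commutes with `y`. Conversely the maps
`x ↦ α x + p(y)`, `y ↦ α y` compose like affine substitutions and have explicit inverses.
-/

open Polynomial

theorem Polynomial.coeff_linearMap_apply {k : Type*} [CommSemiring k] (T : k[X] →ₗ[k] k[X])
    (f : k[X]) (m : ℕ) : (T f).coeff m = ∑ i ∈ f.support, f.coeff i * (T (X ^ i)).coeff m := by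
  conv_lhs => rw [f.as_sum_support]
  simp only [← smul_X_eq_monomial, map_sum, map_smul, finsetSum_coeff, coeff_smul, smul_eq_mul]

structure Module.End.HasLeadingSymbol {k : Type*} [CommSemiring k] (T : Module.End k k[X]) (d : ℕ)
    (Q : k[X]) : Prop where
  symbol_ne_zero : Q ≠ 0
  coeff_apply_X_pow : ∀ n : ℕ, (T (X ^ n)).coeff (n + d) = Q.eval (n : k)
  coeff_apply_X_pow_of_lt : ∀ n e : ℕ, d < e → (T (X ^ n)).coeff (n + e) = 0

namespace Module.End.HasLeadingSymbol

section

variable {k : Type*} [CommSemiring k] {T S : Module.End k k[X]} {d e : ℕ} {Q P : k[X]}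

theorem coeff_apply_of_lt (hT : T.HasLeadingSymbol d Q) {f : k[X]} {N : ℕ}
    (hf : f.natDegree ≤ N) (he : d < e) : (T f).coeff (N + e) = 0 := by
  rw [coeff_linearMap_apply]
  refine Finset.sum_eq_zero fun i hi => ?_
  have hiN : i ≤ N := (le_natDegree_of_mem_supp i hi).trans hf
  rw [show N + e = i + (N + e - i) by omega, hT.coeff_apply_X_pow_of_lt i _ (by omega), mul_zero]

theorem coeff_apply (hT : T.HasLeadingSymbol d Q) {f : k[X]} {N : ℕ} (hf : f.natDegree ≤ N) :
    (T f).coeff (N + d) = f.coeff N * Q.eval (N : k) := by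
  rw [coeff_linearMap_apply, Finset.sum_eq_single N]
  · rw [hT.coeff_apply_X_pow]
  · intro i hi hiN
    have hiN : i < N := lt_of_le_of_ne ((le_natDegree_of_mem_supp i hi).trans hf) hiN
    rw [show N + d = i + (N + d - i) by omega, hT.coeff_apply_X_pow_of_lt i _ (by omega),
      mul_zero]
  · intro hN
    rw [Polynomial.notMem_support_iff.mp hN, zero_mul]

theorem natDegree_apply_X_pow_le (hT : T.HasLeadingSymbol d Q) (n : ℕ) :
    (T (X ^ n)).natDegree ≤ n + d :=
  natDegree_le_iff_coeff_eq_zero.mpr fun N hN => by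
    simpa [show n + (N - n) = N by omega] using hT.coeff_apply_X_pow_of_lt n (N - n) (by omega)

theorem mul [NoZeroDivisors k] (hT : T.HasLeadingSymbol d Q) (hS : S.HasLeadingSymbol e P) :
    (T * S).HasLeadingSymbol (d + e) (P * taylor (e : k) Q) where
  symbol_ne_zero := mul_ne_zero hS.symbol_ne_zero (by simpa using hT.symbol_ne_zero)
  coeff_apply_X_pow n := by
    rw [Module.End.mul_apply, show n + (d + e) = n + e + d by omega,
      hT.coeff_apply (hS.natDegree_apply_X_pow_le n), hS.coeff_apply_X_pow, eval_mul,
      taylor_eval, Nat.cast_add]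
  coeff_apply_X_pow_of_lt n e' he' := by
    rw [Module.End.mul_apply, show n + e' = n + e + (e' - e) by omega,
      hT.coeff_apply_of_lt (hS.natDegree_apply_X_pow_le n) (by omega)]

end

section

variable {k : Type*} [CommRing k] [IsDomain k] [CharZero k] {T : Module.End k k[X]} {d : ℕ}
  {Q : k[X]}

theorem exists_coeff_apply_X_pow_ne_zero (hT : T.HasLeadingSymbol d Q) :
    ∃ n : ℕ, (T (X ^ n)).coeff (n + d) ≠ 0 := by
  by_contra! h
  refine hT.symbol_ne_zero (eq_zero_of_infinite_isRoot Q ?_)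
  refine (Set.infinite_range_of_injective (Nat.cast_injective (R := k))).mono ?_
  rintro _ ⟨n, rfl⟩
  simpa [← hT.coeff_apply_X_pow] using h n

theorem ne_zero (hT : T.HasLeadingSymbol d Q) : T ≠ 0 := by
  obtain ⟨n, hn⟩ := hT.exists_coeff_apply_X_pow_ne_zero
  rintro rfl
  simp at hn

theorem eq_zero_of_one (h : (1 : Module.End k k[X]).HasLeadingSymbol d Q) :
    d = 0 := by
  obtain ⟨n, hn⟩ := h.exists_coeff_apply_X_pow_ne_zero
  by_contra hd
  rw [Module.End.one_apply, coeff_X_pow, if_neg (by omega)] at hn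
  exact hn rfl

end

end Module.End.HasLeadingSymbol

theorem Module.End.eq_lmul_apply_one_of_commute_lmul_X {k : Type*} [CommSemiring k]
    {T : Module.End k k[X]} (h : Commute T (Algebra.lmul k k[X] X)) :
    T = Algebra.lmul k k[X] (T 1) := by
  have hXn (n : ℕ) : (Algebra.lmul k k[X] X ^ n) 1 = X ^ n := by
    rw [← map_pow, Algebra.coe_lmul_eq_mul, LinearMap.mul_apply', mul_one]
  refine lhom_ext' fun n => LinearMap.ext fun a => ?_
  simp only [LinearMap.comp_apply, ← smul_X_eq_monomial, map_smul]
  congr 1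
  calc T (X ^ n) = (Algebra.lmul k k[X] X ^ n) (T 1) := by
        rw [← hXn, ← Module.End.mul_apply, (h.pow_right n).eq, Module.End.mul_apply]
    _ = Algebra.lmul k k[X] (T 1) (X ^ n) := by
        rw [← map_pow, Algebra.coe_lmul_eq_mul, LinearMap.mul_apply', LinearMap.mul_apply',
          mul_comm]

namespace Jordanian

variable {k : Type} [Field k]

theorem x_mul_y : x k * y k = y k * x k + y k * y k := by
  simpa only [x, y, map_mul, map_add] using RingQuot.mkAlgHom_rel k (JordanRel.rel (k := k))

theorem algHom_ext {A : Type*} [Semiring A] [Algebra k A] {f g : Jordanian k →ₐ[k] A}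
    (hx : f (x k) = g (x k)) (hy : f (y k) = g (y k)) : f = g := by
  refine RingQuot.ringQuot_ext' _ _ _ (FreeAlgebra.hom_ext (funext fun i => ?_))
  fin_cases i
  exacts [hx, hy]

theorem induction_on {motive : Jordanian k → Prop} (r : Jordanian k)
    (algebraMap : ∀ c : k, motive (algebraMap k _ c)) (x : motive (x k)) (y : motive (y k))
    (add : ∀ a b, motive a → motive b → motive (a + b))
    (mul : ∀ a b, motive a → motive b → motive (a * b)) : motive r := by
  obtain ⟨a, rfl⟩ := RingQuot.mkAlgHom_surjective k (JordanRel k) r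
  induction a using FreeAlgebra.induction with
  | grade0 c => simpa only [AlgHom.commutes] using algebraMap c
  | grade1 i => fin_cases i; exacts [x, y]
  | mul a b ha hb => simpa only [map_mul] using mul _ _ ha hb
  | add a b ha hb => simpa only [map_add] using add _ _ ha hb

section Lift

variable {A : Type*} [Semiring A] [Algebra k A] (u v : A) (h : u * v = v * u + v * v)

noncomputable def lift : Jordanian k →ₐ[k] A :=
  RingQuot.liftAlgHom k ⟨FreeAlgebra.lift k ![u, v], by rintro _ _ ⟨⟩; simpa using h⟩

@[simp]
theorem lift_x : lift u v h (x k) = u := by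
  simp [lift, x, RingQuot.liftAlgHom_mkAlgHom_apply]

@[simp]
theorem lift_y : lift u v h (y k) = v := by
  simp [lift, y, RingQuot.liftAlgHom_mkAlgHom_apply]

end Lift

theorem x_mul_y_pow (i : ℕ) : x k * y k ^ i = y k ^ i * x k + (i : k) • y k ^ (i + 1) := by
  induction i with
  | zero => simp
  | succ i ih =>
    rw [pow_succ, ← mul_assoc, ih, add_mul, mul_assoc, x_mul_y, smul_mul_assoc, Nat.cast_succ,
      add_smul, one_smul]
    noncomm_ring

variable (k) in
noncomputable def stdMonomial (p : ℕ × ℕ) : Jordanian k := y k ^ p.1 * x k ^ p.2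

theorem mem_span_stdMonomial (r : Jordanian k) :
    r ∈ Submodule.span k (Set.range (stdMonomial k)) := by
  set M := Submodule.span k (Set.range (stdMonomial k))
  have hmem (p : ℕ × ℕ) : stdMonomial k p ∈ M := Submodule.subset_span ⟨p, rfl⟩
  have hstable {a : Jordanian k} (ha : ∀ p, a * stdMonomial k p ∈ M) : ∀ m ∈ M, a * m ∈ M :=
    fun _ hm => (Submodule.span_le.mpr (Set.range_subset_iff.mpr ha) :
      M ≤ M.comap (LinearMap.mulLeft k a)) hm
  suffices ∀ m ∈ M, r * m ∈ M by
    simpa [stdMonomial] using this (stdMonomial k (0, 0)) (hmem _)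
  induction r using induction_on with
  | algebraMap c => intro m hm; simpa [← Algebra.smul_def] using M.smul_mem c hm
  | x =>
    refine hstable fun p => ?_
    have : x k * stdMonomial k p =
        stdMonomial k (p.1, p.2 + 1) + (p.1 : k) • stdMonomial k (p.1 + 1, p.2) := by
      rw [stdMonomial, ← mul_assoc, x_mul_y_pow, add_mul, smul_mul_assoc]
      simp only [stdMonomial, mul_assoc, ← pow_succ']
    rw [this]
    exact add_mem (hmem _) (M.smul_mem _ (hmem _))
  | y =>
    refine hstable fun p => ?_
    have : y k * stdMonomial k p = stdMonomial k (p.1 + 1, p.2) := by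
      simp only [stdMonomial, ← mul_assoc, pow_succ']
    rw [this]
    exact hmem _
  | add a b ha hb => intro m hm; rw [add_mul]; exact add_mem (ha m hm) (hb m hm)
  | mul a b ha hb => intro m hm; rw [mul_assoc]; exact ha _ (hb m hm)

theorem exists_finsupp_sum_eq (r : Jordanian k) :
    ∃ c : ℕ × ℕ →₀ k, (c.sum fun p a => a • stdMonomial k p) = r :=
  Finsupp.mem_span_range_iff_exists_finsupp.mp (mem_span_stdMonomial r)

noncomputable def polyRep : Jordanian k →ₐ[k] Module.End k k[X] :=
  lift (Algebra.lmul k k[X] (X ^ 2) ∘ₗ derivative) (Algebra.lmul k k[X] X) <| by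
    refine LinearMap.ext fun f => ?_
    simp only [Module.End.mul_apply, LinearMap.comp_apply, LinearMap.add_apply,
      Algebra.coe_lmul_eq_mul, LinearMap.mul_apply', derivative_mul, derivative_X]
    ring

theorem polyRep_y : polyRep (y k) = Algebra.lmul k k[X] X := lift_y ..

theorem polyRep_y_pow_apply (i : ℕ) (f : k[X]) : polyRep (y k ^ i) f = X ^ i * f := by
  rw [map_pow, polyRep_y, ← map_pow, Algebra.coe_lmul_eq_mul, LinearMap.mul_apply']

theorem polyRep_x_apply_X_pow (m : ℕ) : polyRep (x k) (X ^ m) = (m : k) • X ^ (m + 1) := by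
  rcases m with _ | m
  · simp [polyRep]
  · simp only [polyRep, lift_x, LinearMap.comp_apply, Algebra.coe_lmul_eq_mul,
      LinearMap.mul_apply', derivative_X_pow, smul_eq_C_mul]
    push_cast
    ring

theorem polyRep_x_pow_apply_X_pow (j n : ℕ) :
    polyRep (x k ^ j) (X ^ n) = (ascPochhammer k j).eval (n : k) • X ^ (n + j) := by
  induction j with
  | zero => simp
  | succ j ih =>
    rw [pow_succ', map_mul, Module.End.mul_apply, ih, map_smul, polyRep_x_apply_X_pow,
      ascPochhammer_succ_eval, smul_smul, Nat.cast_add, ← add_assoc]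

theorem polyRep_stdMonomial_apply_X_pow (p : ℕ × ℕ) (n : ℕ) :
    polyRep (stdMonomial k p) (X ^ n) =
      (ascPochhammer k p.2).eval (n : k) • X ^ (n + p.1 + p.2) := by
  rw [stdMonomial, map_mul, Module.End.mul_apply, polyRep_x_pow_apply_X_pow, map_smul,
    polyRep_y_pow_apply, ← pow_add]
  ring_nf

noncomputable def leadingDegree (c : ℕ × ℕ →₀ k) : ℕ := c.support.sup fun p => p.1 + p.2

noncomputable def symbol (c : ℕ × ℕ →₀ k) (e : ℕ) : k[X] :=
  ∑ p ∈ c.support with p.1 + p.2 = e, c p • ascPochhammer k p.2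

theorem coeff_polyRep_sum_apply_X_pow (c : ℕ × ℕ →₀ k) (n e : ℕ) :
    (polyRep (c.sum fun p a => a • stdMonomial k p) (X ^ n)).coeff (n + e) =
      (symbol c e).eval (n : k) := by
  simp only [Finsupp.sum, symbol, map_sum, map_smul, LinearMap.sum_apply,
    LinearMap.smul_apply, polyRep_stdMonomial_apply_X_pow, finsetSum_coeff, coeff_smul,
    coeff_X_pow, eval_finsetSum, Finset.sum_filter]
  refine Finset.sum_congr rfl fun p _ => ?_
  by_cases hp : p.1 + p.2 = e
  · simp [hp, add_assoc]
  · simp [hp, show n + e ≠ n + p.1 + p.2 by omega]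

theorem symbol_eq_zero_of_lt {c : ℕ × ℕ →₀ k} {e : ℕ} (he : leadingDegree c < e) :
    symbol c e = 0 := by
  refine Finset.sum_eq_zero fun p hp => ?_
  rw [Finset.mem_filter] at hp
  have : p.1 + p.2 ≤ leadingDegree c := Finset.le_sup (f := fun p : ℕ × ℕ => p.1 + p.2) hp.1
  omega

theorem symbol_leadingDegree_ne_zero {c : ℕ × ℕ →₀ k} (hc : c ≠ 0) :
    symbol c (leadingDegree c) ≠ 0 := by
  set t := {p ∈ c.support | p.1 + p.2 = leadingDegree c}
  have ht : t.Nonempty := by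
    obtain ⟨p, hp, hpD⟩ := Finset.exists_mem_eq_sup c.support
      (Finsupp.support_nonempty_iff.mpr hc) fun p : ℕ × ℕ => p.1 + p.2
    exact ⟨p, Finset.mem_filter.mpr ⟨hp, hpD.symm⟩⟩
  obtain ⟨q, hqt, hq⟩ := t.exists_max_image Prod.snd ht
  have hqt' := Finset.mem_filter.mp hqt
  intro h
  have hcoeff := congrArg (coeff · q.2) h
  simp only [symbol, finsetSum_coeff, coeff_smul, coeff_zero, smul_eq_mul] at hcoeff
  have hlead : (ascPochhammer k q.2).coeff q.2 = 1 := by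
    simpa [ascPochhammer_natDegree] using (monic_ascPochhammer k q.2).coeff_natDegree
  rw [Finset.sum_eq_single_of_mem q hqt, hlead] at hcoeff
  · exact Finsupp.mem_support_iff.mp hqt'.1 (by simpa using hcoeff)
  · intro p hpt hpq
    have hpt' := Finset.mem_filter.mp hpt
    have hlt : p.2 < q.2 := lt_of_le_of_ne (hq p hpt) fun h2 => hpq (Prod.ext (by omega) h2)
    rw [coeff_eq_zero_of_natDegree_lt (by rwa [ascPochhammer_natDegree]), mul_zero]

theorem hasLeadingSymbol_polyRep_sum {c : ℕ × ℕ →₀ k} (hc : c ≠ 0) :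
    (polyRep (c.sum fun p a => a • stdMonomial k p)).HasLeadingSymbol (leadingDegree c)
      (symbol c (leadingDegree c)) where
  symbol_ne_zero := symbol_leadingDegree_ne_zero hc
  coeff_apply_X_pow n := coeff_polyRep_sum_apply_X_pow c n _
  coeff_apply_X_pow_of_lt n e he := by
    rw [coeff_polyRep_sum_apply_X_pow, symbol_eq_zero_of_lt he, eval_zero]

theorem exists_hasLeadingSymbol {r : Jordanian k} (hr : r ≠ 0) :
    ∃ d Q, (polyRep r).HasLeadingSymbol d Q := by
  obtain ⟨c, rfl⟩ := exists_finsupp_sum_eq r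
  exact ⟨_, _, hasLeadingSymbol_polyRep_sum (by rintro rfl; simp at hr)⟩

theorem y_ne_zero : y k ≠ 0 := by
  intro h
  have := LinearMap.congr_fun (congrArg polyRep h) 1
  rw [polyRep_y, map_zero, Algebra.coe_lmul_eq_mul, LinearMap.mul_apply', mul_one] at this
  exact X_ne_zero this

instance : Nontrivial (Jordanian k) := ⟨⟨_, _, y_ne_zero⟩⟩

noncomputable def toPolynomial : Jordanian k →ₐ[k] k[X] := lift X 0 (by simp)

theorem exists_eq_aeval_x_add_y_mul (r : Jordanian k) :
    ∃ (q : k[X]) (s : Jordanian k), r = aeval (x k) q + y k * s := by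
  induction mem_span_stdMonomial r using Submodule.span_induction with
  | mem _ h =>
    obtain ⟨⟨_ | i, j⟩, rfl⟩ := h
    · exact ⟨X ^ j, 0, by simp [stdMonomial]⟩
    · exact ⟨0, y k ^ i * x k ^ j, by simp [stdMonomial, pow_succ', mul_assoc]⟩
  | zero => exact ⟨0, 0, by simp⟩
  | add a b _ _ ha hb =>
    obtain ⟨q, s, rfl⟩ := ha
    obtain ⟨q', s', rfl⟩ := hb
    exact ⟨q + q', s + s', by rw [map_add, mul_add]; abel⟩
  | smul c a _ ha =>
    obtain ⟨q, s, rfl⟩ := ha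
    exact ⟨c • q, c • s, by rw [map_smul, mul_smul_comm, smul_add]⟩

theorem exists_eq_y_mul_of_toPolynomial_eq_zero {r : Jordanian k} (hr : toPolynomial r = 0) :
    ∃ s, r = y k * s := by
  obtain ⟨q, s, rfl⟩ := exists_eq_aeval_x_add_y_mul r
  have hq : q = 0 := by
    simpa [toPolynomial, ← aeval_algHom_apply, aeval_X_left_apply] using hr
  exact ⟨s, by rw [hq, map_zero, zero_add]⟩

theorem exists_apply_y_eq_y_mul (φ : Jordanian k →ₐ[k] Jordanian k) :
    ∃ s, φ (y k) = y k * s := by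
  refine exists_eq_y_mul_of_toPolynomial_eq_zero (mul_self_eq_zero.mp ?_)
  have := congrArg (toPolynomial.comp φ) (x_mul_y (k := k))
  simp only [AlgHom.comp_apply, map_mul, map_add] at this
  linear_combination -this

theorem commute_aeval_y (p : k[X]) : Commute (aeval (y k) p) (y k) := by
  simpa using ((commute_X p).map (aeval (y k))).symm

noncomputable def triangular (α : k) (p : k[X]) : Jordanian k →ₐ[k] Jordanian k :=
  lift (α • x k + aeval (y k) p) (α • y k) <| by
    rw [add_mul, mul_add, smul_mul_smul_comm, smul_mul_smul_comm, smul_mul_smul_comm, x_mul_y,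
      smul_mul_assoc, mul_smul_comm, (commute_aeval_y p).eq, smul_add]
    abel

@[simp]
theorem triangular_x (α : k) (p : k[X]) : triangular α p (x k) = α • x k + aeval (y k) p :=
  lift_x ..

@[simp]
theorem triangular_y (α : k) (p : k[X]) : triangular α p (y k) = α • y k :=
  lift_y ..

theorem triangular_comp_triangular (α β : k) (p q : k[X]) :
    (triangular α p).comp (triangular β q) = triangular (α * β) (β • p + q.comp (C α * X)) := by
  refine algHom_ext ?_ ?_
  · have hq : aeval (α • y k) q = aeval (y k) (q.comp (C α * X)) := by
      rw [aeval_comp, map_mul, aeval_C, aeval_X, Algebra.smul_def]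
    rw [AlgHom.comp_apply, triangular_x, map_add, map_smul, triangular_x, ← aeval_algHom_apply,
      triangular_y, hq, triangular_x, map_add, map_smul, smul_add, smul_smul, add_assoc, mul_comm]
  · rw [AlgHom.comp_apply, triangular_y, map_smul, triangular_y, triangular_y, smul_smul, mul_comm]

theorem triangular_one_zero : triangular (1 : k) 0 = AlgHom.id k _ :=
  algHom_ext (by simp) (by simp)

theorem bijective_triangular {α : k} (hα : α ≠ 0) (p : k[X]) :
    Function.Bijective (triangular α p) := by
  set q : k[X] := -(α⁻¹ • p.comp (C α⁻¹ * X))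
  have hleft : (triangular α⁻¹ q).comp (triangular α p) = AlgHom.id k _ := by
    rw [triangular_comp_triangular, inv_mul_cancel₀ hα, smul_neg, smul_smul, mul_inv_cancel₀ hα,
      one_smul, neg_add_cancel, triangular_one_zero]
  have hright : (triangular α p).comp (triangular α⁻¹ q) = AlgHom.id k _ := by
    rw [triangular_comp_triangular, mul_inv_cancel₀ hα, neg_comp, smul_comp, comp_assoc, mul_comp,
      C_comp, X_comp, ← mul_assoc, ← C_mul, inv_mul_cancel₀ hα, C_1, one_mul, comp_X,
      add_neg_cancel, triangular_one_zero]
  exact Function.bijective_iff_has_inverse.mpr ⟨triangular α⁻¹ q, AlgHom.congr_fun hleft,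
    AlgHom.congr_fun hright⟩

section CharZero

variable [CharZero k]

instance : IsDomain (Jordanian k) :=
  have : NoZeroDivisors (Jordanian k) := ⟨fun {a b} hab => by
    by_contra! h
    obtain ⟨d, Q, ha⟩ := exists_hasLeadingSymbol h.1
    obtain ⟨e, P, hb⟩ := exists_hasLeadingSymbol h.2
    exact (ha.mul hb).ne_zero (by rw [← map_mul, hab, map_zero])⟩
  NoZeroDivisors.to_isDomain _

theorem polyRep_injective : Function.Injective (polyRep (k := k)) := by
  refine (injective_iff_map_eq_zero _).mpr fun r hr => ?_
  by_contra h
  obtain ⟨d, Q, hQ⟩ := exists_hasLeadingSymbol h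
  exact hQ.ne_zero hr

theorem exists_algebraMap_eq_of_mul_eq_one {a b : Jordanian k} (h : a * b = 1) :
    ∃ c : k, algebraMap k _ c = a := by
  obtain ⟨ca, rfl⟩ := exists_finsupp_sum_eq a
  obtain ⟨cb, rfl⟩ := exists_finsupp_sum_eq b
  have hca : ca ≠ 0 := by rintro rfl; simp at h
  have hcb : cb ≠ 0 := by rintro rfl; simp at h
  have hone := (hasLeadingSymbol_polyRep_sum hca).mul (hasLeadingSymbol_polyRep_sum hcb)
  rw [← map_mul, h, map_one] at hone
  have hdeg := hone.eq_zero_of_one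
  have hsupp : ca.support ⊆ {0} := fun p hp => by
    have : p.1 + p.2 ≤ leadingDegree ca := Finset.le_sup (f := fun p : ℕ × ℕ => p.1 + p.2) hp
    simpa [Prod.ext_iff] using (by omega : p.1 = 0 ∧ p.2 = 0)
  obtain ⟨c, rfl⟩ := Finsupp.support_subset_singleton'.mp hsupp
  refine ⟨c, ?_⟩
  rw [Finsupp.sum_single_index (by rw [zero_smul]), Algebra.algebraMap_eq_smul_one]
  simp [stdMonomial]

theorem exists_aeval_y_eq_of_commute {u : Jordanian k} (h : Commute u (y k)) :
    ∃ g : k[X], aeval (y k) g = u := by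
  refine ⟨polyRep u 1, polyRep_injective ?_⟩
  rw [← aeval_algHom_apply, polyRep_y, aeval_algHom_apply, aeval_X_left_apply]
  exact (Module.End.eq_lmul_apply_one_of_commute_lmul_X (polyRep_y (k := k) ▸ h.map polyRep)).symm

theorem exists_apply_y_eq_smul_y_of_bijective {φ : Jordanian k →ₐ[k] Jordanian k}
    (hφ : Function.Bijective φ) : ∃ c : k, c ≠ 0 ∧ φ (y k) = c • y k := by
  let ψ := (AlgEquiv.ofBijective φ hφ).symm.toAlgHom
  obtain ⟨s, hs⟩ := exists_apply_y_eq_y_mul φ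
  obtain ⟨w, hw⟩ := exists_apply_y_eq_y_mul ψ
  have hsw : s * φ w = 1 := by
    refine mul_left_cancel₀ (y_ne_zero (k := k)) ?_
    calc y k * (s * φ w) = φ (y k * w) := by rw [map_mul, hs, mul_assoc]
      _ = y k * 1 := by rw [← hw, mul_one]; exact (AlgEquiv.ofBijective φ hφ).apply_symm_apply _
  obtain ⟨c, rfl⟩ := exists_algebraMap_eq_of_mul_eq_one hsw
  refine ⟨c, ?_, by rw [hs, ← Algebra.commutes, Algebra.smul_def]⟩
  rintro rfl
  simp at hsw

theorem exists_apply_x_eq_of_apply_y_eq_smul {φ : Jordanian k →ₐ[k] Jordanian k} {c : k}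
    (hc : c ≠ 0) (hy : φ (y k) = c • y k) : ∃ p : k[X], φ (x k) = c • x k + aeval (y k) p := by
  suffices Commute (φ (x k) - c • x k) (y k) by
    obtain ⟨p, hp⟩ := exists_aeval_y_eq_of_commute this
    exact ⟨p, by rw [hp, add_sub_cancel]⟩
  have hrel : φ (x k) * y k = y k * φ (x k) + c • (y k * y k) := by
    refine smul_right_injective _ hc ?_
    have := congrArg φ (x_mul_y (k := k))
    simp only [map_mul, map_add, hy, mul_smul_comm, smul_mul_assoc, smul_add, smul_smul] at this ⊢
    exact this
  rw [Commute, SemiconjBy, sub_mul, mul_sub, hrel, smul_mul_assoc, mul_smul_comm, x_mul_y,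
    smul_add]
  abel

end CharZero

end Jordanian

theorem jordanian_automorphism_characterization_general (k : Type) [Field k] [CharZero k]
    (φ : Jordanian k →ₐ[k] Jordanian k) :
    Function.Bijective φ ↔
      ∃ (α : k) (p : Polynomial k), α ≠ 0 ∧
        φ (Jordanian.x k) = α • Jordanian.x k + Polynomial.aeval (Jordanian.y k) p ∧
        φ (Jordanian.y k) = α • Jordanian.y k := by
  constructor
  · intro hφ
    obtain ⟨α, hα, hy⟩ := Jordanian.exists_apply_y_eq_smul_y_of_bijective hφ
    obtain ⟨p, hx⟩ := Jordanian.exists_apply_x_eq_of_apply_y_eq_smul hα hy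
    exact ⟨α, p, hα, hx, hy⟩
  · rintro ⟨α, p, hα, hx, hy⟩
    obtain rfl : φ = Jordanian.triangular α p := Jordanian.algHom_ext (by simpa) (by simpa)
    exact Jordanian.bijective_triangular hα p

/-- Let `k` be an algebraically closed field of characteristic zero and
`R = k⟨x,y⟩/(xy - yx - y²)`. A `k`-algebra endomorphism `φ` of `R` is an automorphism if and
only if there exist a nonzero scalar `α ∈ k` and a polynomial `p ∈ k[t]` such that
`φ(x) = α•x + p(y)` and `φ(y) = α•y`. -/
theorem jordanian_automorphism_characterization (k : Type) [Field k] [IsAlgClosed k] [CharZero k]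
    (φ : Jordanian k →ₐ[k] Jordanian k) :
    Function.Bijective φ ↔
      ∃ (α : k) (p : Polynomial k), α ≠ 0 ∧
        φ (Jordanian.x k) = α • Jordanian.x k + Polynomial.aeval (Jordanian.y k) p ∧
        φ (Jordanian.y k) = α • Jordanian.y k :=
  jordanian_automorphism_characterization_general k φ
end

section
/- Let k be a field of characteristic zero and n ≥ 1. If a matrix X ∈ M_n(k) satisfies X*J_n − J_n*X = J_n^2, then the unital k-subalgebra generated by X and J_n equals the unital k-subalgebra generated by X⁰ and J_n: Algebra.adjoin k {X, J_n} = Algebra.adjoin k {X⁰, J_n}. In particular, the image algebra of an n-dimensional representation of the Jordanian algebra in which y acts by a full Jordan block does not depend on the choice of the representation. -/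
/-- The `n × n` nilpotent Jordan block with ones on the subdiagonal:
`(J_n)_{i,j} = 1` iff `i = j + 1`. -/
def jordanBlock (k : Type*) [Field k] (n : ℕ) : Matrix (Fin n) (Fin n) k :=
  Matrix.of fun i j => if (i : ℕ) = (j : ℕ) + 1 then 1 else 0

/-- The matrix `X⁰` whose only nonzero entries are `(X⁰)_{j+1,j} = j` for `j = 0,…,n-2`. -/
def Xzero (k : Type*) [Field k] (n : ℕ) : Matrix (Fin n) (Fin n) k :=
  Matrix.of fun i j => if (i : ℕ) = (j : ℕ) + 1 then ((j : ℕ) : k) else 0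

/-!
Both `X` and `X⁰` satisfy `[·, J_n] = J_n²`, so `X - X⁰` commutes with `J_n`. The first standard
basis vector is cyclic for `J_n`, and anything commuting with an endomorphism that has a cyclic
vector `v` is a polynomial in it (compare both on `v`, then on all `fᵐ v`). Hence
`X - X⁰ ∈ k[J_n]`, and the generating pairs `{X, J_n}`, `{X⁰, J_n}` differ by an element of
`k[J_n]`.
-/

open Matrix

theorem Module.End.mem_adjoin_singleton_of_commute_of_span_eq_top {R M : Type*} [CommSemiring R]
    [AddCommMonoid M] [Module R M] {f g : Module.End R M} {v : M}
    (hv : Submodule.span R (Set.range fun m : ℕ => (f ^ m) v) = ⊤) (hg : Commute g f) :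
    g ∈ Algebra.adjoin R {f} := by
  obtain ⟨h, hS, hhv⟩ : ∃ h ∈ Algebra.adjoin R {f}, h v = g v := by
    have hspan : Submodule.span R (Set.range fun m : ℕ => (f ^ m) v) ≤
        (Subalgebra.toSubmodule (Algebra.adjoin R {f})).map (LinearMap.applyₗ v) := by
      rw [Submodule.span_le, Set.range_subset_iff]
      exact fun m => ⟨f ^ m, Subalgebra.pow_mem _ (Algebra.self_mem_adjoin_singleton R f) m, rfl⟩
    simpa using hspan (hv ▸ Submodule.mem_top : g v ∈ _)
  suffices g = h from this ▸ hS
  refine LinearMap.ext_on_range hv fun m => ?_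
  calc g ((f ^ m) v) = (f ^ m) (g v) := congrArg (· v) ((hg.pow_right m).eq)
    _ = (f ^ m) (h v) := by rw [hhv]
    _ = h ((f ^ m) v) := congrArg (· v) ((Algebra.commute_of_mem_adjoin_self hS).pow_left m).eq

theorem Algebra.adjoin_pair_eq_of_sub_mem_adjoin_singleton {R A : Type*} [CommRing R] [Ring A]
    [Algebra R A] {a b c : A} (h : a - b ∈ Algebra.adjoin R {c}) :
    Algebra.adjoin R {a, c} = Algebra.adjoin R {b, c} := by
  have key : ∀ a b : A, a - b ∈ Algebra.adjoin R {c} →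
      Algebra.adjoin R {a, c} ≤ Algebra.adjoin R {b, c} := by
    intro a b hab
    have hc : Algebra.adjoin R {c} ≤ Algebra.adjoin R {b, c} :=
      Algebra.adjoin_mono (Set.subset_insert b {c})
    refine Algebra.adjoin_le (Set.insert_subset_iff.2 ⟨?_, Set.singleton_subset_iff.2 (hc ?_)⟩)
    · simpa using add_mem (hc hab) (Algebra.subset_adjoin (Set.mem_insert b {c}))
    · exact Algebra.self_mem_adjoin_singleton R c
  exact le_antisymm (key a b h) (key b a (neg_sub a b ▸ neg_mem h))

def subdiagonal {R : Type*} [Zero R] (n d : ℕ) (f : ℕ → R) : Matrix (Fin n) (Fin n) R :=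
  of fun i j => if (i : ℕ) = j + d then f j else 0

theorem subdiagonal_mul_subdiagonal {R : Type*} [NonUnitalNonAssocSemiring R] (n d e : ℕ)
    (f g : ℕ → R) :
    subdiagonal n d f * subdiagonal n e g = subdiagonal n (e + d) fun j => f (j + e) * g j := by
  ext i j
  simp only [mul_apply, subdiagonal, of_apply, ite_mul, mul_ite, zero_mul, mul_zero]
  by_cases he : (j : ℕ) + e < n
  · rw [Finset.sum_eq_single ⟨j + e, he⟩]
    · simp [add_assoc]
    · intro l _ hl
      simp only [if_neg (show (l : ℕ) ≠ j + e from fun h => hl (Fin.ext h))]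
    · simp
  · have hi := i.isLt
    rw [Finset.sum_eq_zero, if_neg (by omega)]
    intro l _
    have hl := l.isLt
    simp only [if_neg (show (l : ℕ) ≠ j + e by omega)]

theorem subdiagonal_sub_subdiagonal {R : Type*} [AddGroup R] (n d : ℕ) (f g : ℕ → R) :
    subdiagonal n d f - subdiagonal n d g = subdiagonal n d (f - g) := by
  ext i j
  simp only [Matrix.sub_apply, subdiagonal, of_apply, Pi.sub_apply]
  split_ifs <;> simp

theorem jordanBlock_eq_subdiagonal (k : Type*) [Field k] (n : ℕ) :
    jordanBlock k n = subdiagonal n 1 1 := rfl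

theorem Xzero_eq_subdiagonal (k : Type*) [Field k] (n : ℕ) :
    Xzero k n = subdiagonal n 1 Nat.cast := rfl

theorem Xzero_mul_jordanBlock_sub (k : Type*) [Field k] (n : ℕ) :
    Xzero k n * jordanBlock k n - jordanBlock k n * Xzero k n = jordanBlock k n ^ 2 := by
  simp only [sq, jordanBlock_eq_subdiagonal, Xzero_eq_subdiagonal, subdiagonal_mul_subdiagonal,
    subdiagonal_sub_subdiagonal]
  congr 1
  ext j
  simp

def unitVector (R : Type*) [Zero R] [One R] (n m : ℕ) : Fin n → R :=
  fun i => if (i : ℕ) = m then 1 else 0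

theorem jordanBlock_mulVec_unitVector (k : Type*) [Field k] (n m : ℕ) :
    jordanBlock k n *ᵥ unitVector k n m = unitVector k n (m + 1) := by
  ext i
  simp only [mulVec, dotProduct, jordanBlock, unitVector, of_apply, mul_ite, mul_one, mul_zero]
  by_cases hm : m < n
  · rw [Finset.sum_eq_single ⟨m, hm⟩] <;> aesop
  · have hi := i.isLt
    rw [Finset.sum_eq_zero, if_neg (by omega)]
    intro j _
    have hj := j.isLt
    simp only [if_neg (show (j : ℕ) ≠ m by omega)]

theorem jordanBlock_pow_mulVec_unitVector (k : Type*) [Field k] (n m : ℕ) :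
    jordanBlock k n ^ m *ᵥ unitVector k n 0 = unitVector k n m := by
  induction m with
  | zero => simp
  | succ m ih => rw [pow_succ', ← mulVec_mulVec, ih, jordanBlock_mulVec_unitVector]

theorem span_jordanBlock_pow_mulVec_unitVector (k : Type*) [Field k] (n : ℕ) :
    Submodule.span k (Set.range fun m : ℕ => jordanBlock k n ^ m *ᵥ unitVector k n 0) = ⊤ := by
  refine eq_top_iff.2 ((Pi.basisFun k (Fin n)).span_eq ▸ Submodule.span_mono ?_)
  rintro _ ⟨i, rfl⟩
  refine ⟨i, ?_⟩
  ext j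
  simp [jordanBlock_pow_mulVec_unitVector, unitVector, Pi.single_apply, Fin.ext_iff]

theorem mem_adjoin_jordanBlock_of_commute {k : Type*} [Field k] {n : ℕ}
    {D : Matrix (Fin n) (Fin n) k} (hD : Commute D (jordanBlock k n)) :
    D ∈ Algebra.adjoin k {jordanBlock k n} := by
  have := Module.End.mem_adjoin_singleton_of_commute_of_span_eq_top
    (f := toLinAlgEquiv' (jordanBlock k n)) (g := toLinAlgEquiv' D)
    (v := unitVector k n 0) ?_ (hD.map _)
  · rw [← AlgEquiv.coe_toAlgHom, ← AlgHom.map_adjoin_singleton] at this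
    obtain ⟨D', hD', hD'D⟩ := Subalgebra.mem_map.1 this
    exact toLinAlgEquiv'.injective hD'D ▸ hD'
  · simpa [← map_pow] using span_jordanBlock_pow_mulVec_unitVector k n

theorem jordanian_full_block_image_independent_general (k : Type*) [Field k]
    (n : ℕ) (X : Matrix (Fin n) (Fin n) k)
    (h : X * jordanBlock k n - jordanBlock k n * X = (jordanBlock k n) ^ 2) :
    Algebra.adjoin k {X, jordanBlock k n} =
      Algebra.adjoin k {Xzero k n, jordanBlock k n} := by
  have hcomm : Commute (X - Xzero k n) (jordanBlock k n) := by
    refine sub_eq_zero.1 ?_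
    calc (X - Xzero k n) * jordanBlock k n - jordanBlock k n * (X - Xzero k n)
        = (X * jordanBlock k n - jordanBlock k n * X) -
            (Xzero k n * jordanBlock k n - jordanBlock k n * Xzero k n) := by noncomm_ring
      _ = 0 := by rw [h, Xzero_mul_jordanBlock_sub, sub_self]
  exact Algebra.adjoin_pair_eq_of_sub_mem_adjoin_singleton (mem_adjoin_jordanBlock_of_commute hcomm)

/-- Let `k` be a field of characteristic zero and `n ≥ 1`.  If a matrix
`X ∈ M_n(k)` satisfies `X*J_n - J_n*X = J_n^2`, then the unital `k`-subalgebra generated by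
`X` and `J_n` equals the one generated by `X⁰` and `J_n`.  In particular, the image algebra of
an `n`-dimensional representation of the Jordanian algebra in which `y` acts by a full Jordan
block does not depend on the choice of the representation. -/
theorem jordanian_full_block_image_independent (k : Type*) [Field k] [CharZero k]
    (n : ℕ) (hn : 1 ≤ n) (X : Matrix (Fin n) (Fin n) k)
    (h : X * jordanBlock k n - jordanBlock k n * X = (jordanBlock k n) ^ 2) :
    Algebra.adjoin k {X, jordanBlock k n} =
      Algebra.adjoin k {Xzero k n, jordanBlock k n} :=
  jordanian_full_block_image_independent_general k n X h
end
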